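/- arXiv:1901.03858 — 2 statements merged into one kernel-verified Lean document; each statement's English description precedes it below -/
import Mathlib

section
/- For probability measures μ, ν with bounded support on the cone of positive invertible operators, δ_T(μ, ν) ≤ d_∞^W(μ, ν), where δ_T(μ,ν) = inf{r ≥ 0 : e^{-r}.ν ≤ μ ≤ e^r.ν} and d_∞^W is the ∞-Wasserstein distance with respect to the Thompson metric. -/
/-! A coupling of `μ` and `ν` whose support has Thompson diameter at most `s` almost surely
pairs `x` with some `y` satisfying `e^{-s} y ≤ x ≤ e^s y`. An upper set containing `x` then
contains `e^s y`, and one containing `e^{-s} y` contains `x`, so comparing the two marginals of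
the coupling on upper sets gives `e^{-s}.ν ≤ μ ≤ e^s.ν`: every `s` admissible for `d_∞^W` is
admissible for `δ_T`. -/

open MeasureTheory Real

variable {E : Type*} [NormedAddCommGroup E] [InnerProductSpace ℂ E] [CompleteSpace E]

/-- The Loewner order on bounded operators: `A ≤ B` iff `B - A` is positive. -/
def opLE (A B : E →L[ℂ] E) : Prop := (B - A).IsPositive

/-- The set of positive invertible operators. -/
def posInv : Set (E →L[ℂ] E) := {A | A.IsPositive ∧ IsUnit A}

/-- The Thompson metric on positive invertible operators:
`d_T(A,B) = inf {r ≥ 0 : e^{-r} B ≤ A ≤ e^r B}`. -/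
noncomputable def thompsonDist (A B : E →L[ℂ] E) : ℝ :=
  sInf {r : ℝ | 0 ≤ r ∧ opLE (exp (-r) • B) A ∧ opLE A (exp r • B)}

variable [MeasurableSpace (E →L[ℂ] E)]

/-- The stochastic order on measures: `μ ≤ ν` iff `μ U ≤ ν U` for every upper closed set. -/
def stochLE (μ ν : Measure (E →L[ℂ] E)) : Prop :=
  ∀ U : Set (E →L[ℂ] E), IsClosed U → (∀ ⦃x⦄, x ∈ U → ∀ ⦃y⦄, opLE x y → y ∈ U) → μ U ≤ ν U

/-- The push-forward of `μ` by scalar multiplication with `α`. -/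
noncomputable def scaleM (α : ℝ) (μ : Measure (E →L[ℂ] E)) : Measure (E →L[ℂ] E) :=
  μ.map (α • ·)

/-- The set of `r ≥ 0` with `e^{-r}.ν ≤ μ ≤ e^r.ν` in the stochastic order. -/
def thompsonSet (μ ν : Measure (E →L[ℂ] E)) : Set ℝ :=
  {r : ℝ | 0 ≤ r ∧ stochLE (scaleM (exp (-r)) ν) μ ∧ stochLE μ (scaleM (exp r) ν)}

/-- The Thompson-metric-like function `δ_T` on measures. -/
noncomputable def deltaT (μ ν : Measure (E →L[ℂ] E)) : ℝ := sInf (thompsonSet μ ν)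

/-- The (topological) support of a measure on the product space. -/
def msupport (pp : Measure ((E →L[ℂ] E) × (E →L[ℂ] E))) : Set ((E →L[ℂ] E) × (E →L[ℂ] E)) :=
  {p | ∀ U : Set ((E →L[ℂ] E) × (E →L[ℂ] E)), IsOpen U → p ∈ U → 0 < pp U}

/-- The set of `s ≥ 0` admitting a coupling of `μ, ν` whose support has Thompson diameter
at most `s`; its infimum is the `∞`-Wasserstein distance `d_∞^W`. -/
def wassersteinSet (μ ν : Measure (E →L[ℂ] E)) : Set ℝ :=
  {s : ℝ | 0 ≤ s ∧ ∃ pp : Measure ((E →L[ℂ] E) × (E →L[ℂ] E)), IsProbabilityMeasure pp ∧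
    pp.map Prod.fst = μ ∧ pp.map Prod.snd = ν ∧
    ∀ p ∈ msupport pp, thompsonDist p.1 p.2 ≤ s}

/-- The `∞`-Wasserstein distance with respect to the Thompson metric. -/
noncomputable def wassersteinInf (μ ν : Measure (E →L[ℂ] E)) : ℝ :=
  sInf (wassersteinSet μ ν)

section CStarAlgebra

variable {A : Type*} [CStarAlgebra A] [PartialOrder A] [StarOrderedRing A]

lemma IsStrictlyPositive.exists_le_smul {a b : A} (ha : IsStrictlyPositive a)
    (hb : IsSelfAdjoint b) : ∃ c : ℝ, b ≤ c • a := by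
  nontriviality A
  obtain ⟨r, hr, hra⟩ := (CFC.exists_pos_algebraMap_le_iff ha.isSelfAdjoint).2
    fun x hx ↦ ha.spectrum_pos hx
  refine ⟨‖b‖ / r, ?_⟩
  calc b ≤ algebraMap ℝ A ‖b‖ := hb.le_algebraMap_norm_self
    _ = (‖b‖ / r) • algebraMap ℝ A r := by
      rw [Algebra.algebraMap_eq_smul_one, Algebra.algebraMap_eq_smul_one, smul_smul,
        div_mul_cancel₀ _ hr.ne']
    _ ≤ (‖b‖ / r) • a := smul_le_smul_of_nonneg_left hra (by positivity)

lemma IsStrictlyPositive.exists_exp_neg_smul_le_and_le_exp_smul {a b : A}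
    (ha : IsStrictlyPositive a) (hb : IsStrictlyPositive b) :
    ∃ r : ℝ, 0 ≤ r ∧ exp (-r) • b ≤ a ∧ a ≤ exp r • b := by
  obtain ⟨c, hc⟩ := hb.exists_le_smul ha.isSelfAdjoint
  obtain ⟨d, hd⟩ := ha.exists_le_smul hb.isSelfAdjoint
  set r := max 0 (max c d)
  -- `x ≤ exp x` turns the comparison constants `c, d ≤ r` into `exp r`.
  have hle_exp : ∀ {t : ℝ} {x y : A}, 0 ≤ y → x ≤ t • y → t ≤ r → x ≤ exp r • y :=
    fun hy hxy ht ↦ hxy.trans <| smul_le_smul_of_nonneg_right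
      (ht.trans <| (le_add_of_nonneg_right zero_le_one).trans (add_one_le_exp r)) hy
  refine ⟨r, le_max_left _ _, ?_, hle_exp hb.nonneg hc (by simp [r])⟩
  rw [exp_neg, inv_smul_le_iff_of_pos (exp_pos r)]
  exact hle_exp ha.nonneg hd (by simp [r])

end CStarAlgebra

section Order

omit [CompleteSpace E] [MeasurableSpace (E →L[ℂ] E)]

lemma opLE_iff_le (A B : E →L[ℂ] E) : opLE A B ↔ A ≤ B := Iff.rfl

lemma posInv_eq : (posInv : Set (E →L[ℂ] E)) = {A | IsStrictlyPositive A} := by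
  ext A
  simp [posInv, IsStrictlyPositive.iff_of_unital, ContinuousLinearMap.nonneg_iff_isPositive]

end Order

section Thompson

omit [MeasurableSpace (E →L[ℂ] E)]

lemma isClosed_setOf_thompson (A B : E →L[ℂ] E) :
    IsClosed {r : ℝ | 0 ≤ r ∧ opLE (exp (-r) • B) A ∧ opLE A (exp r • B)} := by
  simp only [opLE_iff_le]
  exact isClosed_Ici.inter <|
    (isClosed_le (by fun_prop : Continuous fun r : ℝ ↦ exp (-r) • B) continuous_const).inter
      (isClosed_le continuous_const (by fun_prop : Continuous fun r : ℝ ↦ exp r • B))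

lemma thompsonDist_spec {A B : E →L[ℂ] E} (hA : A ∈ posInv) (hB : B ∈ posInv) :
    0 ≤ thompsonDist A B ∧ opLE (exp (-thompsonDist A B) • B) A ∧
      opLE A (exp (thompsonDist A B) • B) := by
  rw [posInv_eq] at hA hB
  exact (isClosed_setOf_thompson A B).csInf_mem
    (hA.exists_exp_neg_smul_le_and_le_exp_smul hB) ⟨0, fun _ hr ↦ hr.1⟩

lemma opLE_of_thompsonDist_le {A B : E →L[ℂ] E} {s : ℝ} (hA : A ∈ posInv) (hB : B ∈ posInv)
    (hs : thompsonDist A B ≤ s) : opLE (exp (-s) • B) A ∧ opLE A (exp s • B) := by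
  obtain ⟨-, hlow, hupp⟩ := thompsonDist_spec hA hB
  simp only [opLE_iff_le] at hlow hupp ⊢
  have hB₀ : 0 ≤ B := (ContinuousLinearMap.nonneg_iff_isPositive B).2 hB.1
  exact ⟨(smul_le_smul_of_nonneg_right (exp_le_exp.2 (neg_le_neg hs)) hB₀).trans hlow,
    hupp.trans (smul_le_smul_of_nonneg_right (exp_le_exp.2 hs) hB₀)⟩

end Thompson

section Coupling

omit [CompleteSpace E]

lemma msupport_eq_support (pp : Measure ((E →L[ℂ] E) × (E →L[ℂ] E))) :
    msupport pp = pp.support := by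
  ext p
  rw [(nhds_basis_opens p).mem_measureSupport]
  exact ⟨fun h U hU ↦ h U hU.2 hU.1, fun h U hU hpU ↦ h U ⟨hpU, hU⟩⟩

lemma ae_mem_msupport [SecondCountableTopology (E →L[ℂ] E)]
    (pp : Measure ((E →L[ℂ] E) × (E →L[ℂ] E))) : ∀ᵐ p ∂pp, p ∈ msupport pp := by
  rw [msupport_eq_support]
  exact Measure.support_mem_ae

variable [BorelSpace (E →L[ℂ] E)]

lemma stochLE_map_of_ae_opLE {γ : Type*} [MeasurableSpace γ] {pp : Measure γ}
    {f g : γ → E →L[ℂ] E} (hf : Measurable f) (hg : AEMeasurable g pp)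
    (h : ∀ᵐ p ∂pp, opLE (f p) (g p)) : stochLE (pp.map f) (pp.map g) := by
  intro U hU hUupper
  rw [Measure.map_apply hf hU.measurableSet]
  exact (measure_mono_ae (h.mono fun _ hp hfp ↦ hUupper hfp hp)).trans
    (Measure.le_map_apply hg U)

lemma scaleM_map {γ : Type*} [MeasurableSpace γ] {pp : Measure γ} {g : γ → E →L[ℂ] E}
    (hg : Measurable g) (α : ℝ) : scaleM α (pp.map g) = pp.map (fun p ↦ α • g p) :=
  Measure.map_map (continuous_const_smul α).measurable hg

lemma mem_thompsonSet_map_of_ae {pp : Measure ((E →L[ℂ] E) × (E →L[ℂ] E))} {s : ℝ} (hs : 0 ≤ s)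
    (h : ∀ᵐ p ∂pp, opLE (exp (-s) • p.2) p.1 ∧ opLE p.1 (exp s • p.2)) :
    s ∈ thompsonSet (pp.map Prod.fst) (pp.map Prod.snd) := by
  refine ⟨hs, ?_, ?_⟩ <;> rw [scaleM_map measurable_snd]
  · exact stochLE_map_of_ae_opLE (by fun_prop) measurable_fst.aemeasurable
      (h.mono fun _ ↦ And.left)
  · exact stochLE_map_of_ae_opLE measurable_fst (by fun_prop) (h.mono fun _ ↦ And.right)

end Coupling

lemma measurableSet_posInv [BorelSpace (E →L[ℂ] E)] :
    MeasurableSet (posInv : Set (E →L[ℂ] E)) := by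
  simp only [posInv_eq, IsStrictlyPositive.iff_of_unital, Set.ofPred_and]
  exact measurableSet_Ici.inter Units.isOpen.measurableSet

theorem deltaT_le_wassersteinInf_general [BorelSpace (E →L[ℂ] E)]
    [SecondCountableTopology (E →L[ℂ] E)]
    (μ ν : Measure (E →L[ℂ] E)) [IsProbabilityMeasure μ] [IsProbabilityMeasure ν]
    (hμ : μ posInv = 1) (hν : ν posInv = 1)
    (hW : (wassersteinSet μ ν).Nonempty) :
    deltaT μ ν ≤ wassersteinInf μ ν := by
  refine le_csInf hW ?_
  rintro s ⟨hs, pp, -, rfl, rfl, hsupp⟩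
  have hfst := ae_of_ae_map measurable_fst.aemeasurable
    ((mem_ae_iff_prob_eq_one measurableSet_posInv).2 hμ)
  have hsnd := ae_of_ae_map measurable_snd.aemeasurable
    ((mem_ae_iff_prob_eq_one measurableSet_posInv).2 hν)
  refine csInf_le ⟨0, fun _ hr ↦ hr.1⟩ (mem_thompsonSet_map_of_ae hs ?_)
  filter_upwards [ae_mem_msupport pp, hfst, hsnd] with p hp hp₁ hp₂
  exact opLE_of_thompsonDist_le hp₁ hp₂ (hsupp p hp)

/-- For boundedly supported probability measures on the cone of positive invertible
operators, `δ_T(μ, ν) ≤ d_∞^W(μ, ν)`. -/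
theorem deltaT_le_wassersteinInf [BorelSpace (E →L[ℂ] E)]
    [SecondCountableTopology (E →L[ℂ] E)]
    (μ ν : Measure (E →L[ℂ] E)) [IsProbabilityMeasure μ] [IsProbabilityMeasure ν]
    (hμ : μ posInv = 1) (hν : ν posInv = 1)
    (hth : (thompsonSet μ ν).Nonempty) (hW : (wassersteinSet μ ν).Nonempty) :
    deltaT μ ν ≤ wassersteinInf μ ν :=
  deltaT_le_wassersteinInf_general μ ν hμ hν hW
end

section
/- For Hermitian positive definite N×N matrices, if a map Φ from matrices to matrices is unital positive linear, then Φ(A #_α B) ≤ Φ(A) #_α Φ(B) for all positive definite A, B and α ∈ [0,1], where #_α is the weighted geometric mean. -/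
open scoped ComplexOrder

/-- The positive square root `A^{1/2}` via the continuous functional calculus. -/
noncomputable def rsqrt {n : Type*} [Fintype n] [DecidableEq n]
    (A : Matrix n n ℂ) : Matrix n n ℂ :=
  cfc Real.sqrt A

/-- The inverse square root `A^{-1/2}` via the continuous functional calculus. -/
noncomputable def risqrt {n : Type*} [Fintype n] [DecidableEq n]
    (A : Matrix n n ℂ) : Matrix n n ℂ :=
  cfc (fun x : ℝ => (Real.sqrt x)⁻¹) A

/-- The `α`-weighted geometric mean `A #_α B = A^{1/2}(A^{-1/2} B A^{-1/2})^α A^{1/2}`. -/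
noncomputable def wgm {n : Type*} [Fintype n] [DecidableEq n]
    (α : ℝ) (A B : Matrix n n ℂ) : Matrix n n ℂ :=
  rsqrt A * cfc (fun x : ℝ => x ^ α) (risqrt A * B * risqrt A) * rsqrt A

/-!
Conjugating `Φ` by `Φ(A)^{-1/2}` on the outside and by `A^{1/2}` on the inside gives a unital
positive map `Ψ`, and Ando's inequality becomes the Jensen-type inequality `Ψ(T^p) ≤ Ψ(T)^p` for
`T = A^{-1/2} B A^{-1/2}`. Fix a vector `v`. The spectral decompositions of `T` and `Ψ(T)` turn
`⟪v, Ψ(f T) v⟫` and `⟪v, f(Ψ T) v⟫` into integrals of `f` against two finite positive measures of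
the same mass. Since `x ^ p` is a positive combination `∫ t ^ p (t⁻¹ - (t + x)⁻¹) dt` of
resolvents, it suffices to compare the resolvents `(t + x)⁻¹`, and that is Choi's inequality
`Ψ(X)⁻¹ ≤ Ψ(X⁻¹)` for `X = t + T`.
-/

open scoped MatrixOrder

namespace Real

open MeasureTheory Set

variable {p : ℝ}

lemma sum_rpowIntegrand₀₁_mul {ι : Type*} [Fintype ι] (μ c : ι → ℝ) (t : ℝ) :
    ∑ i, rpowIntegrand₀₁ p t (μ i) * c i =
      t ^ p * (t⁻¹ * ∑ i, c i - ∑ i, (t + μ i)⁻¹ * c i) := by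
  simp only [rpowIntegrand₀₁, Finset.mul_sum, ← Finset.sum_sub_distrib]
  exact Finset.sum_congr rfl fun i _ => by ring

lemma sum_rpow_mul_eq_integral {ι : Type*} [Fintype ι] (hp : p ∈ Ioo 0 1) {μ : ι → ℝ}
    (hμ : ∀ i, 0 ≤ μ i) (c : ι → ℝ) :
    ∑ i, μ i ^ p * c i = (∫ t in Ioi 0, rpowIntegrand₀₁ p t 1)⁻¹ *
      ∫ t in Ioi 0, ∑ i, rpowIntegrand₀₁ p t (μ i) * c i := by
  rw [integral_finsetSum _ fun i _ => (integrableOn_rpowIntegrand₀₁_Ioi hp (hμ i)).mul_const _,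
    Finset.mul_sum]
  refine Finset.sum_congr rfl fun i _ => ?_
  rw [integral_mul_const, rpow_eq_const_mul_integral hp (hμ i)]
  ring

lemma sum_rpow_mul_le_of_sum_inv_add_mul_le {ι κ : Type*} [Fintype ι] [Fintype κ]
    (hp : p ∈ Ioo 0 1) {μ : ι → ℝ} {ν : κ → ℝ} (hμ : ∀ i, 0 ≤ μ i) (hν : ∀ j, 0 ≤ ν j)
    {c : ι → ℝ} {d : κ → ℝ} (hsum : ∑ i, c i = ∑ j, d j)
    (hres : ∀ t > 0, ∑ j, (t + ν j)⁻¹ * d j ≤ ∑ i, (t + μ i)⁻¹ * c i) :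
    ∑ i, μ i ^ p * c i ≤ ∑ j, ν j ^ p * d j := by
  rw [sum_rpow_mul_eq_integral hp hμ, sum_rpow_mul_eq_integral hp hν]
  refine mul_le_mul_of_nonneg_left (setIntegral_mono_on ?_ ?_ measurableSet_Ioi fun t ht => ?_)
    (inv_nonneg.2 (integral_rpowIntegrand₀₁_one_pos hp).le)
  · exact integrable_finsetSum _ fun i _ =>
      (integrableOn_rpowIntegrand₀₁_Ioi hp (hμ i)).mul_const _
  · exact integrable_finsetSum _ fun j _ =>
      (integrableOn_rpowIntegrand₀₁_Ioi hp (hν j)).mul_const _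
  · rw [sum_rpowIntegrand₀₁_mul, sum_rpowIntegrand₀₁_mul, hsum]
    gcongr
    · exact (rpow_pos_of_pos ht p).le
    · exact hres t ht

end Real

namespace Matrix

variable {𝕜 n m : Type*} [RCLike 𝕜] [Fintype n] [Fintype m]

section QuadraticForm

lemma IsHermitian.star_mulVec_dotProduct {H : Matrix n n 𝕜} (hH : H.IsHermitian)
    (v u : n → 𝕜) : star (H *ᵥ v) ⬝ᵥ u = star v ⬝ᵥ H *ᵥ u := by
  rw [star_mulVec, ← dotProduct_mulVec, hH.eq]

lemma PosSemidef.re_dotProduct_mulVec_sq_le {M : Matrix n n 𝕜} (hM : M.PosSemidef)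
    (w v : n → 𝕜) :
    RCLike.re (star w ⬝ᵥ M *ᵥ v) ^ 2 ≤
      RCLike.re (star w ⬝ᵥ M *ᵥ w) * RCLike.re (star v ⬝ᵥ M *ᵥ v) := by
  let _ := M.toSeminormedAddCommGroup hM
  let _ := M.toInnerProductSpace hM
  have h := inner_mul_inner_self_le (𝕜 := 𝕜) w v
  rw [norm_inner_symm v w, ← sq] at h
  rw [dotProduct_comm (star w), dotProduct_comm (star w), dotProduct_comm (star v), ← sq_abs]
  exact (pow_le_pow_left₀ (abs_nonneg _) (RCLike.abs_re_le_norm _) 2).trans h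

lemma re_dotProduct_mulVec_le_of_le {X Y : Matrix n n 𝕜} (h : X ≤ Y) (v : n → 𝕜) :
    RCLike.re (star v ⬝ᵥ X *ᵥ v) ≤ RCLike.re (star v ⬝ᵥ Y *ᵥ v) := by
  have := (le_iff.mp h).re_dotProduct_nonneg v
  rwa [sub_mulVec, dotProduct_sub, map_sub, sub_nonneg] at this

lemma le_of_re_dotProduct_mulVec_le {X Y : Matrix n n 𝕜} (hX : X.IsHermitian)
    (hY : Y.IsHermitian)
    (h : ∀ v, RCLike.re (star v ⬝ᵥ X *ᵥ v) ≤ RCLike.re (star v ⬝ᵥ Y *ᵥ v)) : X ≤ Y := by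
  refine le_iff.mpr (.of_dotProduct_mulVec_nonneg (hY.sub hX) fun v => ?_)
  rw [RCLike.nonneg_iff, (hY.sub hX).im_star_dotProduct_mulVec_self]
  simpa [sub_mulVec, dotProduct_sub] using h v

end QuadraticForm

variable [DecidableEq n]

namespace IsHermitian

variable {A : Matrix n n 𝕜}

noncomputable def eigenProj (hA : A.IsHermitian) (i : n) : Matrix n n 𝕜 :=
  (hA.eigenvectorUnitary : Matrix n n 𝕜) * diagonal (Pi.single i 1) *
    star (hA.eigenvectorUnitary : Matrix n n 𝕜)

lemma posSemidef_eigenProj (hA : A.IsHermitian) (i : n) : (hA.eigenProj i).PosSemidef := by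
  rw [eigenProj, star_eq_conjTranspose]
  refine (PosSemidef.diagonal fun j => ?_).mul_mul_conjTranspose_same _
  rcases eq_or_ne j i with rfl | hji
  · simp
  · simp [hji]

lemma cfc_eq_sum_smul_eigenProj (hA : A.IsHermitian) (f : ℝ → ℝ) :
    cfc f A = ∑ i, (f (hA.eigenvalues i) : 𝕜) • hA.eigenProj i := by
  have hdiag : diagonal (RCLike.ofReal ∘ f ∘ hA.eigenvalues : n → 𝕜) =
      ∑ i, (f (hA.eigenvalues i) : 𝕜) • diagonal (Pi.single i 1) := by
    ext j k
    by_cases hjk : j = k <;>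
      simp [hjk, Pi.single_apply, Matrix.sum_apply, RCLike.real_smul_eq_coe_mul]
  simp only [hA.cfc_eq, IsHermitian.cfc, Unitary.conjStarAlgAut_apply, hdiag, Finset.mul_sum,
    Finset.sum_mul, eigenProj, mul_smul_comm, smul_mul_assoc]

lemma dotProduct_map_cfc_mulVec (hA : A.IsHermitian) (Ψ : Matrix n n 𝕜 →ₗ[𝕜] Matrix m m 𝕜)
    (f : ℝ → ℝ) (w v : m → 𝕜) :
    star w ⬝ᵥ Ψ (cfc f A) *ᵥ v =
      ∑ i, (f (hA.eigenvalues i) : 𝕜) * (star w ⬝ᵥ Ψ (hA.eigenProj i) *ᵥ v) := by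
  simp [hA.cfc_eq_sum_smul_eigenProj, sum_mulVec, dotProduct_sum, smul_mulVec,
    RCLike.real_smul_eq_coe_mul]

lemma re_dotProduct_map_cfc_mulVec (hA : A.IsHermitian) (Ψ : Matrix n n 𝕜 →ₗ[𝕜] Matrix m m 𝕜)
    (f : ℝ → ℝ) (v : m → 𝕜) :
    RCLike.re (star v ⬝ᵥ Ψ (cfc f A) *ᵥ v) =
      ∑ i, f (hA.eigenvalues i) * RCLike.re (star v ⬝ᵥ Ψ (hA.eigenProj i) *ᵥ v) := by
  simp [hA.dotProduct_map_cfc_mulVec]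

end IsHermitian

lemma cfc_inv_const_add {T : Matrix n n 𝕜} (hT : T.PosSemidef) {t : ℝ} (ht : 0 < t) :
    cfc (fun x => (t + x)⁻¹) T = (algebraMap ℝ _ t + T)⁻¹ := by
  rw [cfc_inv (fun x => t + x) T fun x hx =>
      (add_pos_of_pos_of_nonneg ht (spectrum_nonneg_of_nonneg hT.nonneg hx)).ne',
    cfc_const_add t (fun x => x) T, cfc_id' ℝ T, nonsing_inv_eq_ringInverse]

section PositiveMap

variable [DecidableEq m] (Ψ : Matrix n n 𝕜 →ₗ[𝕜] Matrix m m 𝕜) (hΨ1 : Ψ 1 = 1)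
  (hΨ : ∀ X, X.PosSemidef → (Ψ X).PosSemidef)
include hΨ1 hΨ

lemma posDef_map_of_posDef {X : Matrix n n 𝕜} (hX : X.PosDef) : (Ψ X).PosDef := by
  have hΨX := (hΨ X hX.posSemidef).1
  refine .of_dotProduct_mulVec_pos hΨX fun v hv => ?_
  rw [RCLike.pos_iff, hΨX.im_star_dotProduct_mulVec_self, and_iff_left rfl]
  have hmass := hX.1.re_dotProduct_map_cfc_mulVec Ψ (fun _ => 1) v
  have hmean := hX.1.re_dotProduct_map_cfc_mulVec Ψ (fun x => x) v
  rw [cfc_const_one ℝ X, hΨ1] at hmass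
  rw [cfc_id' ℝ X] at hmean
  simp only [one_mul] at hmass
  have hpos : ∑ _i : n, (0 : ℝ) < ∑ i, RCLike.re (star v ⬝ᵥ Ψ (hX.1.eigenProj i) *ᵥ v) := by
    simpa [← hmass] using PosDef.one.re_dotProduct_pos hv
  obtain ⟨i, -, hi⟩ := Finset.exists_lt_of_sum_lt hpos
  rw [hmean]
  refine Finset.sum_pos' (fun j _ => mul_nonneg (hX.eigenvalues_pos j).le ?_) ⟨i, by simp, ?_⟩
  · exact (hΨ _ (hX.1.posSemidef_eigenProj j)).re_dotProduct_nonneg v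
  · exact mul_pos (hX.eigenvalues_pos i) hi

/-- Choi's inequality. With `w = Ψ(X)⁻¹ v` and `X = ∑ μᵢ Pᵢ`, the number `R = ⟪v, Ψ(X)⁻¹ v⟫` is
both `∑ re ⟪w, Ψ(Pᵢ) v⟫` and `∑ μᵢ ⟪w, Ψ(Pᵢ) w⟫`; Cauchy–Schwarz, first for each positive
semidefinite `Ψ(Pᵢ)` and then over `i`, gives `R² ≤ R ⟪v, Ψ(X⁻¹) v⟫`. -/
theorem inv_map_le_map_inv {X : Matrix n n 𝕜} (hX : X.PosDef) : (Ψ X)⁻¹ ≤ Ψ X⁻¹ := by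
  have hS := posDef_map_of_posDef Ψ hΨ1 hΨ hX
  have hE i := hΨ _ (hX.1.posSemidef_eigenProj i)
  refine le_of_re_dotProduct_mulVec_le hS.inv.1 (hΨ _ hX.inv.posSemidef).1 fun v => ?_
  set w := (Ψ X)⁻¹ *ᵥ v
  set R := RCLike.re (star v ⬝ᵥ (Ψ X)⁻¹ *ᵥ v)
  set Q := RCLike.re (star v ⬝ᵥ Ψ X⁻¹ *ᵥ v)
  have hw : star w ⬝ᵥ v = star v ⬝ᵥ (Ψ X)⁻¹ *ᵥ v := hS.inv.1.star_mulVec_dotProduct v v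
  have hR : R = ∑ i, RCLike.re (star w ⬝ᵥ Ψ (hX.1.eigenProj i) *ᵥ v) := by
    have h := hX.1.dotProduct_map_cfc_mulVec Ψ (fun _ => 1) w v
    rw [cfc_const_one ℝ X, hΨ1, one_mulVec, hw] at h
    simp [R, h]
  have hR' : R = ∑ i, hX.1.eigenvalues i * RCLike.re (star w ⬝ᵥ Ψ (hX.1.eigenProj i) *ᵥ w) := by
    have h := hX.1.re_dotProduct_map_cfc_mulVec Ψ (fun x => x) w
    rwa [cfc_id' ℝ X, mulVec_mulVec, mul_nonsing_inv _ ((isUnit_iff_isUnit_det _).mp hS.isUnit),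
      one_mulVec, hw] at h
  have hQ : Q = ∑ i, (hX.1.eigenvalues i)⁻¹ *
      RCLike.re (star v ⬝ᵥ Ψ (hX.1.eigenProj i) *ᵥ v) := by
    rw [← hX.1.re_dotProduct_map_cfc_mulVec, cfc_ringInverse_id _ hX.isUnit,
      ← nonsing_inv_eq_ringInverse]
  have hCS : R ^ 2 ≤ R * Q := by
    conv_lhs => rw [hR]
    conv_rhs => rw [hR', hQ]
    refine Finset.sum_sq_le_sum_mul_sum_of_sq_le_mul _ (fun i _ => ?_) (fun i _ => ?_)
      fun i _ => ?_
    · exact mul_nonneg (hX.eigenvalues_pos i).le ((hE i).re_dotProduct_nonneg w)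
    · exact mul_nonneg (inv_nonneg.2 (hX.eigenvalues_pos i).le) ((hE i).re_dotProduct_nonneg v)
    · have hμ := (hX.eigenvalues_pos i).ne'
      exact ((hE i).re_dotProduct_mulVec_sq_le w v).trans_eq (by field_simp)
  have hR0 : 0 ≤ R := hS.inv.posSemidef.re_dotProduct_nonneg v
  have hQ0 : 0 ≤ Q := (hΨ _ hX.inv.posSemidef).re_dotProduct_nonneg v
  nlinarith

theorem map_cfc_rpow_le_cfc_rpow_map {T : Matrix n n 𝕜} (hT : T.PosSemidef) {p : ℝ}
    (hp : p ∈ Set.Icc 0 1) : Ψ (cfc (fun x : ℝ => x ^ p) T) ≤ cfc (fun x : ℝ => x ^ p) (Ψ T) := by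
  have hS := hΨ T hT
  obtain rfl | hp0 := hp.1.eq_or_lt
  · simp [cfc_const_one ℝ T, cfc_const_one ℝ (Ψ T) hS.1.isSelfAdjoint, hΨ1]
  obtain rfl | hp1 := hp.2.eq_or_lt
  · simp [cfc_id' ℝ T, cfc_id' ℝ (Ψ T) hS.1.isSelfAdjoint]
  have hTp : (cfc (fun x : ℝ => x ^ p) T).PosSemidef := nonneg_iff_posSemidef.mp <|
    cfc_nonneg fun x hx => Real.rpow_nonneg (spectrum_nonneg_of_nonneg hT.nonneg hx) p
  refine le_of_re_dotProduct_mulVec_le (hΨ _ hTp).1 (cfc_predicate _ _) fun v => ?_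
  have hSf := hS.1.re_dotProduct_map_cfc_mulVec LinearMap.id
  simp only [LinearMap.id_apply] at hSf
  rw [hT.1.re_dotProduct_map_cfc_mulVec, hSf]
  refine Real.sum_rpow_mul_le_of_sum_inv_add_mul_le ⟨hp0, hp1⟩ hT.eigenvalues_nonneg
    hS.eigenvalues_nonneg ?_ fun t ht => ?_
  · have h := hT.1.re_dotProduct_map_cfc_mulVec Ψ (fun _ => 1) v
    rw [cfc_const_one ℝ T, hΨ1, ← cfc_const_one ℝ (Ψ T), hSf] at h
    simpa using h.symm
  · have hX : (algebraMap ℝ _ t + T).PosDef :=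
      (isStrictlyPositive_iff_posDef.mp (isStrictlyPositive_algebraMap ht)).add_posSemidef hT
    have hΨt : Ψ (algebraMap ℝ _ t) = algebraMap ℝ _ t := by
      simp [Algebra.algebraMap_eq_smul_one, hΨ1]
    have h := re_dotProduct_mulVec_le_of_le (inv_map_le_map_inv Ψ hΨ1 hΨ hX) v
    rwa [map_add, hΨt, ← cfc_inv_const_add hT ht, ← cfc_inv_const_add hS ht, hSf,
      hT.1.re_dotProduct_map_cfc_mulVec] at h

end PositiveMap

end Matrix

section GeometricMean

open Matrix

variable {n m : Type*} [Fintype n] [DecidableEq n] {A : Matrix n n ℂ}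

lemma isHermitian_rsqrt (A : Matrix n n ℂ) : (rsqrt A).IsHermitian := cfc_predicate _ _

lemma isHermitian_risqrt (A : Matrix n n ℂ) : (risqrt A).IsHermitian := cfc_predicate _ _

lemma rsqrt_mul_rsqrt (hA : A.PosSemidef) : rsqrt A * rsqrt A = A := by
  rw [rsqrt, ← cfc_mul ..]
  exact (cfc_congr fun x hx => Real.mul_self_sqrt (spectrum_nonneg_of_nonneg hA.nonneg hx)).trans
    (cfc_id' ℝ A)

lemma rsqrt_mul_risqrt (hA : A.PosDef) : rsqrt A * risqrt A = 1 := by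
  rw [rsqrt, risqrt, ← cfc_mul _ _ _ (hg := A.finite_real_spectrum.continuousOn _),
    ← cfc_const_one ℝ A]
  exact cfc_congr fun x hx =>
    mul_inv_cancel₀ (Real.sqrt_pos.2 (hA.isStrictlyPositive.spectrum_pos hx)).ne'

lemma risqrt_mul_rsqrt (hA : A.PosDef) : risqrt A * rsqrt A = 1 := by
  rw [rsqrt, risqrt, ← cfc_mul _ _ _ (A.finite_real_spectrum.continuousOn _),
    ← cfc_const_one ℝ A]
  exact cfc_congr fun x hx =>
    inv_mul_cancel₀ (Real.sqrt_pos.2 (hA.isStrictlyPositive.spectrum_pos hx)).ne'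

lemma risqrt_mul_self_mul_risqrt (hA : A.PosDef) : risqrt A * A * risqrt A = 1 := by
  nth_rw 2 [← rsqrt_mul_rsqrt hA.posSemidef]
  rw [← mul_assoc, risqrt_mul_rsqrt hA, one_mul, rsqrt_mul_risqrt hA]

lemma rsqrt_mul_risqrt_conj_mul_rsqrt (hA : A.PosDef) (X : Matrix n n ℂ) :
    rsqrt A * (risqrt A * X * risqrt A) * rsqrt A = X := by
  simp only [← mul_assoc, rsqrt_mul_risqrt hA, one_mul]
  rw [mul_assoc, risqrt_mul_rsqrt hA, mul_one]

theorem map_wgm_le_wgm_map [Fintype m] [DecidableEq m] (Φ : Matrix n n ℂ →ₗ[ℂ] Matrix m m ℂ)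
    (hΦ1 : Φ 1 = 1) (hΦ : ∀ X, X.PosSemidef → (Φ X).PosSemidef) (hA : A.PosDef)
    {B : Matrix n n ℂ} (hB : B.PosSemidef) {p : ℝ} (hp : p ∈ Set.Icc 0 1) :
    Φ (wgm p A B) ≤ wgm p (Φ A) (Φ B) := by
  have hC := posDef_map_of_posDef Φ hΦ1 hΦ hA
  set Ψ := LinearMap.mulLeftRight ℂ (risqrt (Φ A), risqrt (Φ A)) ∘ₗ Φ ∘ₗ
    LinearMap.mulLeftRight ℂ (rsqrt A, rsqrt A)
  have hΨ1 : Ψ 1 = 1 := by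
    simp [Ψ, rsqrt_mul_rsqrt hA.posSemidef, risqrt_mul_self_mul_risqrt hC]
  have hΨ : ∀ X, X.PosSemidef → (Ψ X).PosSemidef := fun X hX => by
    simpa [Ψ, (isHermitian_risqrt _).eq, (isHermitian_rsqrt _).eq] using
      (hΦ _ (hX.mul_mul_conjTranspose_same (rsqrt A))).mul_mul_conjTranspose_same (risqrt (Φ A))
  have hT := hB.conjTranspose_mul_mul_same (risqrt A)
  rw [(isHermitian_risqrt A).eq] at hT
  have key := (isHermitian_rsqrt (Φ A)).isSelfAdjoint.conjugate_le_conjugate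
    (map_cfc_rpow_le_cfc_rpow_map Ψ hΨ1 hΨ hT hp)
  simpa [Ψ, wgm, rsqrt_mul_risqrt_conj_mul_rsqrt hA, rsqrt_mul_risqrt_conj_mul_rsqrt hC] using key

end GeometricMean

/-- Ando's inequality: a unital positive linear map `Φ` satisfies
`Φ(A #_α B) ≤ Φ(A) #_α Φ(B)` for positive definite `A, B` and `α ∈ [0,1]`. -/
theorem positive_linear_map_weighted_geometric_mean
    (N K : ℕ) (Φ : Matrix (Fin N) (Fin N) ℂ → Matrix (Fin K) (Fin K) ℂ)
    (hlin : IsLinearMap ℂ Φ) (hunital : Φ 1 = 1)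
    (hpos : ∀ A : Matrix (Fin N) (Fin N) ℂ, A.PosSemidef → (Φ A).PosSemidef)
    (A B : Matrix (Fin N) (Fin N) ℂ) (hA : A.PosDef) (hB : B.PosDef)
    (α : ℝ) (hα : 0 ≤ α) (hα1 : α ≤ 1) :
    (wgm α (Φ A) (Φ B) - Φ (wgm α A B)).PosSemidef :=
  Matrix.le_iff.mp <|
    map_wgm_le_wgm_map (IsLinearMap.mk' Φ hlin) hunital hpos hA hB.posSemidef ⟨hα, hα1⟩
end
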